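/- arXiv:math/0601488 — 4 statements merged into one kernel-verified Lean document; each statement's English description precedes it below -/
import Mathlib

section
/- Let G be an additive subgroup of F_q × F_q of order k such that K_G is a k-arc. Then every secant of K_G meets the line ℓ∞ in a point Ā∞ with A a nonzero element of G; consequently the set {Ā∞ : A ∈ G, A ≠ (0,0)} is a blocking set of the secants of K_G of size k − 1 contained in the line ℓ∞ (i.e., every translation arc is a hyperfocused arc). -/
open Projectivization

abbrev PGPoint (K : Type*) [Field K] := Projectivization K (Fin 3 → K)

lemma vec3_ne_zero_left {K : Type*} [Field K] {a b c : K} (h : a ≠ 0) :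
    ![a, b, c] ≠ 0 := fun hv => h (by simpa using congrFun hv 0)

lemma vec3_ne_zero_right {K : Type*} [Field K] {a b c : K} (h : c ≠ 0) :
    ![a, b, c] ≠ 0 := fun hv => h (by simpa using congrFun hv 2)

/-- The affine point `(a, b, 1)` of `PG(2,q)`. -/
def affPt {K : Type*} [Field K] (a b : K) : PGPoint K :=
  Projectivization.mk K ![a, b, 1] (vec3_ne_zero_right one_ne_zero)

/-- Three points of `PG(2,q)` are collinear if they lie in a common subspace
of projective dimension at most one. -/
def Coll3 {K : Type*} [Field K] (p q r : PGPoint K) : Prop :=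
  ∃ W : Submodule K (Fin 3 → K), Module.finrank K W ≤ 2 ∧
    p.submodule ≤ W ∧ q.submodule ≤ W ∧ r.submodule ≤ W

/-- An arc: a set of points no three of which are collinear. -/
def IsArc {K : Type*} [Field K] (S : Set (PGPoint K)) : Prop :=
  ∀ p ∈ S, ∀ q ∈ S, ∀ r ∈ S, p ≠ q → p ≠ r → q ≠ r → ¬ Coll3 p q r

/-- `B` is a blocking set of the secants of `S`. -/
def BlocksSecants {K : Type*} [Field K] (S B : Set (PGPoint K)) : Prop :=
  (∀ b ∈ B, b ∉ S) ∧ ∀ p ∈ S, ∀ q ∈ S, p ≠ q → ∃ b ∈ B, Coll3 p q b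

/-- Lines of `PG(2,q)` as point sets. -/
def IsLine {K : Type*} [Field K] (L : Set (PGPoint K)) : Prop :=
  ∃ W : Submodule K (Fin 3 → K), Module.finrank K W = 2 ∧
    L = {x : PGPoint K | x.submodule ≤ W}

/-- The line `ℓ∞ : X₃ = 0`. -/
def lInf (K : Type*) [Field K] : Set (PGPoint K) := {x : PGPoint K | x.rep 2 = 0}

/-- The point set `K_G = {(a, b, 1) : (a,b) ∈ G}`. -/
def KG {K : Type*} [Field K] (G : Set (K × K)) : Set (PGPoint K) :=
  (fun A : K × K => affPt A.1 A.2) '' G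

/-- The linear map underlying the elation `φ_A`, `A = (a₁, a₂)`. -/
def elationLin (K : Type*) [Field K] (a1 a2 : K) : (Fin 3 → K) →ₗ[K] (Fin 3 → K) where
  toFun v := ![v 0 + a1 * v 2, v 1 + a2 * v 2, v 2]
  map_add' u v := by funext i; fin_cases i <;> simp <;> ring
  map_smul' c v := by funext i; fin_cases i <;> simp <;> ring

lemma elationLin_injective {K : Type*} [Field K] (a1 a2 : K) :
    Function.Injective (elationLin K a1 a2) := by
  intro u v h
  have h0 := congrFun h 0
  have h1 := congrFun h 1
  have h2 := congrFun h 2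
  simp [elationLin] at h0 h1 h2
  rw [h2] at h0 h1
  have e0 : u 0 = v 0 := add_right_cancel h0
  have e1 : u 1 = v 1 := add_right_cancel h1
  funext i
  fin_cases i <;> assumption

/-- The elation `φ_A : (X₁,X₂,X₃) ↦ (X₁+a₁X₃, X₂+a₂X₃, X₃)` as a map on `PG(2,q)`. -/
def elation {K : Type*} [Field K] (a1 a2 : K) : PGPoint K → PGPoint K :=
  Projectivization.map (elationLin K a1 a2) (elationLin_injective a1 a2)

/-- The linear map underlying the homology
`(X₁,X₂,X₃) ↦ (λX₁+a₁X₃, λX₂+a₂X₃, X₃)`. -/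
def homologyLin (K : Type*) [Field K] (l a1 a2 : K) : (Fin 3 → K) →ₗ[K] (Fin 3 → K) where
  toFun v := ![l * v 0 + a1 * v 2, l * v 1 + a2 * v 2, v 2]
  map_add' u v := by funext i; fin_cases i <;> simp <;> ring
  map_smul' c v := by funext i; fin_cases i <;> simp <;> ring

lemma homologyLin_injective {K : Type*} [Field K] {l : K} (hl : l ≠ 0) (a1 a2 : K) :
    Function.Injective (homologyLin K l a1 a2) := by
  intro u v h
  have h0 := congrFun h 0
  have h1 := congrFun h 1
  have h2 := congrFun h 2
  simp [homologyLin] at h0 h1 h2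
  rw [h2] at h0 h1
  have e0 : u 0 = v 0 := mul_left_cancel₀ hl (add_right_cancel h0)
  have e1 : u 1 = v 1 := mul_left_cancel₀ hl (add_right_cancel h1)
  funext i
  fin_cases i <;> assumption

/-- The homology with axis `ℓ∞` as a map on `PG(2,q)`. -/
def homology {K : Type*} [Field K] {l : K} (hl : l ≠ 0) (a1 a2 : K) :
    PGPoint K → PGPoint K :=
  Projectivization.map (homologyLin K l a1 a2) (homologyLin_injective hl a1 a2)

lemma one_add_ne_zero {K : Type*} [Field K] [CharP K 2] {l : K} (h : l ≠ 1) :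
    1 + l ≠ 0 := by
  intro h0
  apply h
  have : l = -1 := by linear_combination h0
  rw [this, CharTwo.neg_eq]

lemma add_one_ne_zero' {K : Type*} [Field K] [CharP K 2] {l : K} (h : l ≠ 1) :
    l + 1 ≠ 0 := by rw [add_comm]; exact one_add_ne_zero h

lemma vec3_ne_zero_mid {K : Type*} [Field K] {a b c : K} (h : b ≠ 0) :
    ![a, b, c] ≠ 0 := fun hv => h (by simpa using congrFun hv 1)

lemma vec3_ne_zero_pair {K : Type*} [Field K] {A : K × K} (h : A ≠ (0, 0)) :
    ![A.1, A.2, 0] ≠ 0 := by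
  intro hv
  apply h
  have h0 := congrFun hv 0
  have h1 := congrFun hv 1
  simp at h0 h1
  exact Prod.ext h0 h1

/-- The set `{Ā∞ : A ∈ G, A ≠ (0,0)}` of points at infinity associated to the
nonzero elements of `G`. -/
def Binf {K : Type*} [Field K] (G : Set (K × K)) : Set (PGPoint K) :=
  {x : PGPoint K | ∃ A ∈ G, ∃ h : A ≠ (0, 0),
    x = Projectivization.mk K ![A.1, A.2, 0] (vec3_ne_zero_pair h)}


lemma finrank_span_pair_le {K : Type*} [Field K] (v w : Fin 3 → K) :
    Module.finrank K (Submodule.span K ({v, w} : Set (Fin 3 → K))) ≤ 2 := by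
  classical
  refine (finrank_span_le_card _).trans ?_
  simp [Set.toFinset_insert]
  exact (Finset.card_insert_le _ _).trans (by simp)

lemma coll3_of_mem_span {K : Type*} [Field K] {u v w : Fin 3 → K}
    (hu : u ≠ 0) (hv : v ≠ 0) (hw : w ≠ 0)
    (h3 : w ∈ Submodule.span K ({u, v} : Set (Fin 3 → K))) :
    Coll3 (Projectivization.mk K u hu) (Projectivization.mk K v hv)
      (Projectivization.mk K w hw) := by
  refine ⟨Submodule.span K {u, v}, finrank_span_pair_le u v, ?_, ?_, ?_⟩ <;>
    rw [Projectivization.submodule_mk, Submodule.span_singleton_le_iff_mem]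
  · exact Submodule.subset_span (by simp)
  · exact Submodule.subset_span (by simp)
  · exact h3

lemma affPt_injective {K : Type*} [Field K] {a b c d : K}
    (h : affPt a b = affPt c d) : a = c ∧ b = d := by
  rw [affPt, affPt, Projectivization.mk_eq_mk_iff] at h
  obtain ⟨u, hu⟩ := h
  have h2 : (u : K) = 1 := by simpa [Units.smul_def] using congrFun hu 2
  have h0 : (u : K) * c = a := by simpa [Units.smul_def] using congrFun hu 0
  have h1 : (u : K) * d = b := by simpa [Units.smul_def] using congrFun hu 1
  rw [h2, one_mul] at h0 h1
  exact ⟨h0.symm, h1.symm⟩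

/-- every secant of a translation arc `K_G` meets `ℓ∞` in a point
`Ā∞` with `A ∈ G` nonzero; the set of these points is a blocking set of the
secants of `K_G` of size `k - 1` contained in `ℓ∞`. -/
theorem translation_arc_is_hyperfocused
    {r : ℕ} (hr : 1 ≤ r) {K : Type*} [Field K] [Fintype K]
    (hq : Fintype.card K = 2 ^ r)
    (G : AddSubgroup (K × K)) (k : ℕ) (hk : Nat.card G = k)
    (harc : IsArc (KG (G : Set (K × K)))) :
    BlocksSecants (KG (G : Set (K × K))) (Binf (G : Set (K × K))) ∧
      (Binf (G : Set (K × K))).ncard = k - 1 ∧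
      Binf (G : Set (K × K)) ⊆ lInf K := by
  classical
  have hG0 : ((0, 0) : K × K) ∈ G := G.zero_mem
  set f : K × K → PGPoint K := fun A =>
    if h : A = (0, 0) then affPt 0 0
    else Projectivization.mk K ![A.1, A.2, 0] (vec3_ne_zero_pair h) with hf
  have hBinf_img : Binf (G : Set (K × K)) = f '' ((G : Set (K × K)) \ {(0, 0)}) := by
    ext x
    constructor
    · rintro ⟨A, hA, hne, rfl⟩
      exact ⟨A, ⟨hA, hne⟩, dif_neg hne⟩
    · rintro ⟨A, ⟨hA, hne⟩, rfl⟩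
      have hne' : A ≠ (0, 0) := hne
      refine ⟨A, hA, hne', ?_⟩
      simp only [hf]
      rw [dif_neg hne']
  have hnotin : ∀ b ∈ Binf (G : Set (K × K)), b ∉ KG (G : Set (K × K)) := by
    rintro b ⟨A, hA, hne, rfl⟩ hbK
    obtain ⟨B, hB, hBeq⟩ := hbK
    have h : affPt B.1 B.2 = Projectivization.mk K ![A.1, A.2, 0] (vec3_ne_zero_pair hne) :=
      hBeq
    rw [affPt, Projectivization.mk_eq_mk_iff] at h
    obtain ⟨u, hu⟩ := h
    have h2 : (u : K) * 0 = 1 := by simpa [Units.smul_def] using congrFun hu 2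
    simp at h2
  refine ⟨⟨hnotin, ?_⟩, ?_, ?_⟩
  · rintro p ⟨A, hA, rfl⟩ q ⟨B, hB, rfl⟩ hpq
    have hAB : A ≠ B := fun h => hpq (by rw [h])
    have hmem : A - B ∈ G := G.sub_mem hA hB
    have hne : A - B ≠ (0, 0) := fun h => hAB (sub_eq_zero.mp h)
    refine ⟨Projectivization.mk K ![(A - B).1, (A - B).2, 0] (vec3_ne_zero_pair hne),
      ⟨A - B, hmem, hne, rfl⟩, ?_⟩
    apply coll3_of_mem_span
    have hv : (![(A - B).1, (A - B).2, 0] : Fin 3 → K)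
        = ![A.1, A.2, 1] - ![B.1, B.2, 1] := by
      funext i; fin_cases i <;> simp
    rw [hv]
    exact Submodule.sub_mem _
      (Submodule.subset_span (by simp)) (Submodule.subset_span (by simp))
  · have hinj : Set.InjOn f ((G : Set (K × K)) \ {(0, 0)}) := by
      rintro A ⟨hA, hA0⟩ B ⟨hB, hB0⟩ hfe
      simp only [Set.mem_singleton_iff] at hA0 hB0
      by_contra hAB
      simp only [hf, dif_neg hA0, dif_neg hB0] at hfe
      rw [Projectivization.mk_eq_mk_iff] at hfe
      obtain ⟨u, hu⟩ := hfe
      have h0 : (u : K) * B.1 = A.1 := by simpa [Units.smul_def] using congrFun hu 0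
      have h1 : (u : K) * B.2 = A.2 := by simpa [Units.smul_def] using congrFun hu 1
      have hO : affPt (0:K) 0 ∈ KG (G : Set (K × K)) := ⟨(0,0), hG0, rfl⟩
      have hAk : affPt A.1 A.2 ∈ KG (G : Set (K × K)) := ⟨A, hA, rfl⟩
      have hBk : affPt B.1 B.2 ∈ KG (G : Set (K × K)) := ⟨B, hB, rfl⟩
      have hOA : affPt (0:K) 0 ≠ affPt A.1 A.2 := fun h => by
        obtain ⟨h1', h2'⟩ := affPt_injective h
        exact hA0 (by rw [Prod.ext_iff]; exact ⟨h1'.symm, h2'.symm⟩)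
      have hOB : affPt (0:K) 0 ≠ affPt B.1 B.2 := fun h => by
        obtain ⟨h1', h2'⟩ := affPt_injective h
        exact hB0 (by rw [Prod.ext_iff]; exact ⟨h1'.symm, h2'.symm⟩)
      have hABp : affPt A.1 A.2 ≠ affPt B.1 B.2 := fun h => by
        obtain ⟨h1', h2'⟩ := affPt_injective h
        exact hAB (Prod.ext h1' h2')
      refine harc _ hO _ hAk _ hBk hOA hOB hABp ?_
      apply coll3_of_mem_span
      have hu0 : (u : K) ≠ 0 := u.ne_zero
      have hB1 : B.1 = (u : K)⁻¹ * A.1 := by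
        rw [← h0]; field_simp
      have hB2 : B.2 = (u : K)⁻¹ * A.2 := by
        rw [← h1]; field_simp
      have hv : (![B.1, B.2, 1] : Fin 3 → K)
          = (u : K)⁻¹ • ![A.1, A.2, 1] + (1 - (u : K)⁻¹) • ![(0:K), 0, 1] := by
        funext i; fin_cases i <;> simp [hB1, hB2] <;> ring
      rw [hv]
      exact Submodule.add_mem _
        (Submodule.smul_mem _ _ (Submodule.subset_span (by simp)))
        (Submodule.smul_mem _ _ (Submodule.subset_span (by simp)))
    rw [hBinf_img, Set.ncard_image_of_injOn hinj,
      Set.ncard_diff_singleton_of_mem hG0, ← hk]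
    exact congrArg (· - 1) (Nat.card_coe_set_eq _).symm
  · rintro x ⟨A, hA, hne, rfl⟩
    obtain ⟨u, hu⟩ := (Projectivization.mk_eq_mk_iff K _ _ _ _).1
      (Projectivization.mk_rep (Projectivization.mk K ![A.1, A.2, 0] (vec3_ne_zero_pair hne)))
    have h2 := congrFun hu 2
    simpa [lInf, Units.smul_def] using h2.symm
end

section
/- Let q = 2^r with r ≥ 1, let H be an additive subgroup of F_q, and let i be a positive integer with gcd(i,r) = 1. Then for G = {(α, α^{2^i}) : α ∈ H}, the set K_G = {(α, α^{2^i}, 1) : α ∈ H} is an arc in PG(2,q), i.e., no three of its points are collinear. -/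
open Projectivization

lemma frob_gcd_aux {K : Type*} [Monoid K] (t : K) :
    ∀ m n : ℕ, t ^ 2 ^ m = t → t ^ 2 ^ n = t → t ^ 2 ^ (Nat.gcd m n) = t := by
  intro m
  induction m using Nat.strong_induction_on with
  | _ m ih =>
    intro n hm hn
    rcases Nat.eq_zero_or_pos m with h0 | hpos
    · subst h0; simpa using hn
    · rw [Nat.gcd_rec]
      apply ih (n % m) (Nat.mod_lt _ hpos) m ?_ hm
      have hmul : ∀ q : ℕ, t ^ 2 ^ (m * q) = t := by
        intro q
        induction q with
        | zero => simp
        | succ q ihq =>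
          have h1 : m * (q + 1) = m * q + m := by ring
          rw [h1, pow_add, pow_mul, ihq, hm]
      calc t ^ 2 ^ (n % m) = (t ^ 2 ^ (m * (n / m))) ^ 2 ^ (n % m) := by rw [hmul]
        _ = t ^ (2 ^ (m * (n / m)) * 2 ^ (n % m)) := (pow_mul _ _ _).symm
        _ = t ^ 2 ^ (m * (n / m) + n % m) := by rw [pow_add]
        _ = t ^ 2 ^ n := by rw [Nat.div_add_mod]
        _ = t := hn

lemma frob_fix_eq_one {r : ℕ} {K : Type*} [Field K] [Fintype K]
    (hq : Fintype.card K = 2 ^ r) {i : ℕ} (hir : Nat.gcd i r = 1)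
    {t : K} (ht : t ≠ 0) (h : t ^ 2 ^ i = t) : t = 1 := by
  have hr' : t ^ 2 ^ r = t := by rw [← hq]; exact FiniteField.pow_card t
  have hg := frob_gcd_aux t i r h hr'
  rw [hir] at hg
  have h2 : t * t = t * 1 := by
    have h1 : t ^ 2 = t := by simpa using hg
    rw [sq] at h1; rw [h1, mul_one]
  exact mul_left_cancel₀ ht h2

lemma charP_two_of_card {r : ℕ} {K : Type*} [Field K] [Fintype K]
    (hq : Fintype.card K = 2 ^ r) : CharP K 2 := by
  obtain ⟨n, hp, hc⟩ := FiniteField.card K (ringChar K)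
  have hdvd : ringChar K ∣ 2 ^ r := by
    rw [← hq, hc]
    exact dvd_pow_self _ (by exact_mod_cast n.pos.ne')
  have h2 : ringChar K = 2 :=
    (Nat.prime_dvd_prime_iff_eq hp Nat.prime_two).mp (hp.dvd_of_dvd_pow hdvd)
  have hrc := ringChar.charP K
  rwa [h2] at hrc

/-- for any additive subgroup `H` of `F_q`, `q = 2^r`, and any
positive integer `i` with `gcd(i,r) = 1`, the set
`K_G = {(α, α^{2^i}, 1) : α ∈ H}` is an arc. -/
theorem KG_frobenius_isArc
    {r : ℕ} (hr : 1 ≤ r) {K : Type*} [Field K] [Fintype K]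
    (hq : Fintype.card K = 2 ^ r) (H : AddSubgroup K)
    (i : ℕ) (hi : 0 < i) (hir : Nat.gcd i r = 1) :
    IsArc (KG ((fun α : K => (α, α ^ 2 ^ i)) '' (H : Set K))) := by
  haveI hp2 : CharP K 2 := charP_two_of_card hq
  haveI : Fact (Nat.Prime 2) := ⟨Nat.prime_two⟩
  have h2 : (2 : K) = 0 := CharTwo.two_eq_zero
  rintro p hp q hq' r' hr' hpq hpr hqr ⟨W, hW, hpW, hqW, hrW⟩
  obtain ⟨A, ⟨α, hα, rfl⟩, rfl⟩ := hp
  obtain ⟨B, ⟨β, hβ, rfl⟩, rfl⟩ := hq'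
  obtain ⟨C, ⟨γ, hγ, rfl⟩, rfl⟩ := hr'
  simp only at hpq hpr hqr hpW hqW hrW
  -- the three parameters are distinct
  have hab : α ≠ β := fun h => hpq (by rw [h])
  have hac : α ≠ γ := fun h => hpr (by rw [h])
  have hbc : β ≠ γ := fun h => hqr (by rw [h])
  have hadd : ∀ {x y : K}, x ≠ y → x + y ≠ 0 := by
    intro x y hxy h
    apply hxy
    have := eq_neg_of_add_eq_zero_left h
    rwa [CharTwo.neg_eq] at this
  set s : ℕ := 2 ^ i with hs
  set va : Fin 3 → K := ![α, α ^ s, 1] with hva'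
  set vb : Fin 3 → K := ![β, β ^ s, 1] with hvb'
  set vc : Fin 3 → K := ![γ, γ ^ s, 1] with hvc'
  have hva : va ∈ W := by
    apply hpW
    simp only [affPt, Projectivization.submodule_mk]
    exact Submodule.mem_span_singleton_self _
  have hvb : vb ∈ W := by
    apply hqW
    simp only [affPt, Projectivization.submodule_mk]
    exact Submodule.mem_span_singleton_self _
  have hvc : vc ∈ W := by
    apply hrW
    simp only [affPt, Projectivization.submodule_mk]
    exact Submodule.mem_span_singleton_self _
  -- the three vectors are linearly independent
  have hli : LinearIndependent K ![va, vb, vc] := by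
    rw [Fintype.linearIndependent_iff]
    intro g hg
    rw [Fin.sum_univ_three] at hg
    have e0 := congrFun hg 0
    have e1 := congrFun hg 1
    have e2 := congrFun hg 2
    simp only [hva', hvb', hvc', Pi.add_apply, Pi.smul_apply, smul_eq_mul,
      Matrix.cons_val_zero, Matrix.cons_val_one, Matrix.head_cons, Pi.zero_apply,
      Matrix.cons_val_two, Matrix.tail_cons, mul_one] at e0 e1 e2
    have hx : g 0 = g 1 + g 2 := by
      linear_combination e2 - (g 1 + g 2) * h2
    have hyu : g 1 * (α + β) = g 2 * (α + γ) := by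
      linear_combination e0 - α * hx - (g 2 * α + g 2 * γ) * h2
    have hyus : g 1 * (α + β) ^ s = g 2 * (α + γ) ^ s := by
      rw [hs, add_pow_char_pow, add_pow_char_pow]
      linear_combination e1 - α ^ (2 ^ i) * hx - (g 2 * α ^ (2 ^ i) + g 2 * γ ^ (2 ^ i)) * h2
    have hu : α + β ≠ 0 := hadd hab
    have hv : α + γ ≠ 0 := hadd hac
    by_cases hz : g 2 = 0
    · have hy : g 1 = 0 := by
        rw [hz, zero_mul] at hyu
        exact (mul_eq_zero.mp hyu).resolve_right hu
      have hx0 : g 0 = 0 := by rw [hx, hy, hz, add_zero]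
      intro j; fin_cases j <;> assumption
    · exfalso
      have hy : g 1 ≠ 0 := by
        intro hy0
        rw [hy0, zero_mul] at hyu
        exact hz ((mul_eq_zero.mp hyu.symm).resolve_right hv)
      have key : (α + β) ^ s * (α + γ) = (α + γ) ^ s * (α + β) :=
        mul_left_cancel₀ (mul_ne_zero hy hz)
          (by linear_combination (g 2 * (α + γ)) * hyus - (g 2 * (α + γ) ^ s) * hyu)
      have ht : ((α + β) / (α + γ)) ^ 2 ^ i = (α + β) / (α + γ) := by
        rw [div_pow, div_eq_div_iff (pow_ne_zero _ hv) hv]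
        linear_combination key
      have h1 := frob_fix_eq_one hq hir (div_ne_zero hu hv) ht
      have huv : α + β = α + γ := (div_eq_one_iff_eq hv).mp h1
      exact hbc (add_left_cancel huv)
  -- contradiction with the dimension bound
  have hspan : Submodule.span K (Set.range ![va, vb, vc]) ≤ W := by
    rw [Submodule.span_le]
    rintro x ⟨j, rfl⟩
    fin_cases j <;> assumption
  have h3 : Module.finrank K (Submodule.span K (Set.range ![va, vb, vc])) = 3 := by
    rw [finrank_span_eq_card hli, Fintype.card_fin]
  have hle := Submodule.finrank_mono hspan
  rw [h3] at hle
  omega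
end

section
/- Let G be an additive subgroup of F_q × F_q of order k such that K_G is a k-arc, and let A ∈ (F_q × F_q) \ G be such that the point Ā belongs to no secant of K_G. Then the set K_G ∪ φ_A(K_G) is a 2k-arc, and it equals K_{G'} for the additive subgroup G' = G ∪ (G + A). -/
open Projectivization

/-! In affine coordinates `K_G` is `G` itself, three affine points are collinear exactly when
they are affinely dependent, and `φ_A` is the translation by `A`, so that
`K_G ∪ φ_A(K_G) = K_{G ∪ (G + A)}`. Of three distinct points of `G ∪ (G + A)` two lie in the same
coset of `G`, and since the reflection `v ↦ A - v` swaps the two cosets we may take them in `G`.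
If the third point lies in `G` as well we use that `K_G` is an arc; if it is `g + A`, translating
by `-g` turns the triple into a secant of `K_G` through `Ā`. In characteristic two
`A + A = 0 ∈ G`, which makes `G ∪ (G + A)` a subgroup, of order `2k` because `A ∉ G`. -/

def IsAffineArc (k : Type*) {V : Type*} [Ring k] [AddCommGroup V] [Module k V] (S : Set V) :
    Prop :=
  ∀ x ∈ S, ∀ y ∈ S, ∀ z ∈ S, x ≠ y → x ≠ z → y ≠ z → AffineIndependent k ![x, y, z]

section Affine

variable {k V : Type*} [Ring k] [AddCommGroup V] [Module k V]

lemma affineIndependent_three_map_iff {x y z : V} (e : V ≃ᵃ[k] V) :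
    AffineIndependent k ![e x, e y, e z] ↔ AffineIndependent k ![x, y, z] := by
  rw [← e.affineIndependent_iff (p := ![x, y, z])]
  congr!
  ext i
  fin_cases i <;> rfl

variable {G : AddSubgroup V} {A : V}

lemma affineIndependent_of_two_mem_of_mem_union (hG : IsAffineArc k (G : Set V))
    (hAsec : ∀ x ∈ G, ∀ y ∈ G, x ≠ y → AffineIndependent k ![x, y, A])
    {x y z : V} (hx : x ∈ G) (hy : y ∈ G) (hz : z ∈ (G : Set V) ∪ (· + A) '' G)
    (hxy : x ≠ y) (hxz : x ≠ z) (hyz : y ≠ z) : AffineIndependent k ![x, y, z] := by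
  obtain hz | ⟨g, hg, rfl⟩ := hz
  · exact hG x hx y hy z hz hxy hxz hyz
  -- translating by `-g` moves the third point to `A`
  have := hAsec (x - g) (G.sub_mem hx hg) (y - g) (G.sub_mem hy hg) (sub_left_injective.ne hxy)
  rw [← affineIndependent_three_map_iff (AffineEquiv.constVAdd k V g)] at this
  simpa [add_comm g A] using this

lemma affineIndependent_of_two_mem_add_of_mem_union (hG : IsAffineArc k (G : Set V))
    (hAsec : ∀ x ∈ G, ∀ y ∈ G, x ≠ y → AffineIndependent k ![x, y, A])
    {x y z : V} (hx : x ∈ (· + A) '' (G : Set V)) (hy : y ∈ (· + A) '' (G : Set V))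
    (hz : z ∈ (G : Set V) ∪ (· + A) '' G)
    (hxy : x ≠ y) (hxz : x ≠ z) (hyz : y ≠ z) : AffineIndependent k ![x, y, z] := by
  -- the point reflection `v ↦ A - v` exchanges `G` and `G + A`
  let σ := AffineEquiv.constVSub k A
  have hσ : ∀ v, σ v = A - v := fun _ => rfl
  rw [← affineIndependent_three_map_iff σ]
  obtain ⟨gx, hgx, rfl⟩ := hx
  obtain ⟨gy, hgy, rfl⟩ := hy
  refine affineIndependent_of_two_mem_of_mem_union hG hAsec (x := σ (gx + A)) (y := σ (gy + A))
    (by simpa [hσ] using G.neg_mem hgx) (by simpa [hσ] using G.neg_mem hgy) ?_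
    (σ.injective.ne hxy) (σ.injective.ne hxz) (σ.injective.ne hyz)
  obtain hz | ⟨g, hg, rfl⟩ := hz
  · exact Or.inr ⟨-z, G.neg_mem hz, neg_add_eq_sub z A⟩
  · exact Or.inl (by simpa [hσ] using G.neg_mem hg)

lemma isAffineArc_union_add (hG : IsAffineArc k (G : Set V))
    (hAsec : ∀ x ∈ G, ∀ y ∈ G, x ≠ y → AffineIndependent k ![x, y, A]) :
    IsAffineArc k ((G : Set V) ∪ (· + A) '' G) := by
  have pair : ∀ {x y z : V}, (x ∈ G ∧ y ∈ G ∨ x ∈ (· + A) '' (G : Set V) ∧ y ∈ (· + A) '' G) →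
      z ∈ (G : Set V) ∪ (· + A) '' G → x ≠ y → x ≠ z → y ≠ z →
      AffineIndependent k ![x, y, z] := by
    rintro x y z (⟨hx, hy⟩ | ⟨hx, hy⟩)
    exacts [affineIndependent_of_two_mem_of_mem_union hG hAsec hx hy,
      affineIndependent_of_two_mem_add_of_mem_union hG hAsec hx hy]
  intro x hx y hy z hz hxy hxz hyz
  have hx' := hx
  have hy' := hy
  have hz' := hz
  -- two of the three points lie in the same coset of `G`
  rcases hx with hx | hx <;> rcases hy with hy | hy <;> rcases hz with hz | hz
  all_goals first
    | exact pair (by tauto) hz' hxy hxz hyz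
    | exact (pair (by tauto) hy' hxz hxy hyz.symm).comm_right
    | exact (pair (by tauto) hx' hyz hxy.symm hxz.symm).comm_left.reverse_of_three

end Affine

section Projective

variable {K : Type*} [Field K]

lemma coll3_mk_iff {u v w : Fin 3 → K} (hu : u ≠ 0) (hv : v ≠ 0) (hw : w ≠ 0) :
    Coll3 (mk K u hu) (mk K v hv) (mk K w hw) ↔ ¬ LinearIndependent K ![u, v, w] := by
  simp only [Coll3, submodule_mk, Submodule.span_singleton_le_iff_mem]
  rw [linearIndependent_iff_card_eq_finrank_span, Fintype.card_fin]
  unfold Set.finrank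
  constructor
  · rintro ⟨W, hW, hu, hv, hw⟩ h3
    have hle : Submodule.span K (Set.range ![u, v, w]) ≤ W := by
      rw [Submodule.span_le]
      rintro _ ⟨i, rfl⟩
      fin_cases i <;> assumption
    have := Submodule.finrank_mono hle
    omega
  · intro h
    have hle := finrank_range_le_card (R := K) ![u, v, w]
    unfold Set.finrank at hle
    refine ⟨Submodule.span K (Set.range ![u, v, w]), ?_, Submodule.subset_span ⟨0, rfl⟩,
      Submodule.subset_span ⟨1, rfl⟩, Submodule.subset_span ⟨2, rfl⟩⟩
    rw [Fintype.card_fin] at hle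
    omega

lemma linearIndependent_lift_iff {ι : Type*} [Fintype ι] (p : ι → K × K) :
    LinearIndependent K (fun i => ![(p i).1, (p i).2, 1]) ↔ AffineIndependent K p := by
  rw [Fintype.linearIndependent_iff, affineIndependent_iff_of_fintype]
  refine forall_congr' fun w => ?_
  have hsum : ∑ i, w i • ![(p i).1, (p i).2, 1] =
      ![(∑ i, w i • p i).1, (∑ i, w i • p i).2, ∑ i, w i] := by
    ext j
    fin_cases j <;> simp [Finset.sum_apply, Prod.fst_sum, Prod.snd_sum]
  constructor
  · intro h hw hp
    rw [Finset.weightedVSub_eq_linear_combination _ hw] at hp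
    exact h (by rw [hsum, hp, hw]; simp)
  · intro h hlift
    rw [hsum] at hlift
    have hw : ∑ i, w i = 0 := by simpa using congrFun hlift 2
    refine h hw ?_
    rw [Finset.weightedVSub_eq_linear_combination _ hw]
    exact Prod.ext (by simpa using congrFun hlift 0) (by simpa using congrFun hlift 1)

lemma coll3_affPt_iff (x y z : K × K) :
    Coll3 (affPt x.1 x.2) (affPt y.1 y.2) (affPt z.1 z.2) ↔ ¬ AffineIndependent K ![x, y, z] := by
  have hlift : ![![x.1, x.2, 1], ![y.1, y.2, 1], ![z.1, z.2, 1]] =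
      fun i => ![(![x, y, z] i).1, (![x, y, z] i).2, 1] := by
    funext i
    fin_cases i <;> rfl
  rw [affPt, affPt, affPt, coll3_mk_iff, hlift, linearIndependent_lift_iff]

lemma affPt_eq_affPt_iff {x y : K × K} : affPt x.1 x.2 = affPt y.1 y.2 ↔ x = y := by
  refine ⟨fun h => ?_, fun h => h ▸ rfl⟩
  obtain ⟨c, hc⟩ := (mk_eq_mk_iff _ _ _ _ _).1 h
  have h2 : (c : K) = 1 := by simpa [Units.smul_def] using congrFun hc 2
  have h0 := congrFun hc 0
  have h1 := congrFun hc 1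
  simp only [Units.smul_def, h2, one_smul] at h0 h1
  exact Prod.ext (by simpa using h0.symm) (by simpa using h1.symm)

lemma isArc_KG_iff {S : Set (K × K)} : IsArc (KG S) ↔ IsAffineArc K S := by
  simp only [IsArc, KG, Set.forall_mem_image, ne_eq, affPt_eq_affPt_iff, coll3_affPt_iff,
    not_not, IsAffineArc]

lemma ncard_KG (S : Set (K × K)) : (KG S).ncard = S.ncard :=
  Set.ncard_image_of_injective S fun _ _ h => affPt_eq_affPt_iff.1 h

lemma elation_affPt (A c : K × K) :
    elation A.1 A.2 (affPt c.1 c.2) = affPt (c.1 + A.1) (c.2 + A.2) := by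
  rw [elation, affPt, map_mk, affPt, mk_eq_mk_iff']
  refine ⟨1, ?_⟩
  ext i
  fin_cases i <;> simp [elationLin]

lemma elation_image_KG (A : K × K) (S : Set (K × K)) :
    elation A.1 A.2 '' KG S = KG ((· + A) '' S) := by
  simp only [KG, Set.image_image, elation_affPt, Prod.fst_add, Prod.snd_add]

end Projective

namespace AddSubgroup

variable {M : Type*} [AddCommGroup M] (G : AddSubgroup M) (A : M)

def unionAddCoset (h2A : A + A ∈ G) : AddSubgroup M where
  carrier := (G : Set M) ∪ (· + A) '' G
  add_mem' := by
    rintro _ _ (hx | ⟨x, hx, rfl⟩) (hy | ⟨y, hy, rfl⟩)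
    · exact Or.inl (G.add_mem hx hy)
    · exact Or.inr ⟨_ + y, G.add_mem hx hy, add_assoc _ y A⟩
    · exact Or.inr ⟨x + _, G.add_mem hx hy, (add_right_comm x A _).symm⟩
    · exact Or.inl (by rw [add_add_add_comm]; exact G.add_mem (G.add_mem hx hy) h2A)
  zero_mem' := Or.inl G.zero_mem
  neg_mem' := by
    rintro _ (hx | ⟨x, hx, rfl⟩)
    · exact Or.inl (G.neg_mem hx)
    · exact Or.inr ⟨-x - (A + A), G.sub_mem (G.neg_mem hx) h2A,
      show -x - (A + A) + A = -(x + A) by abel⟩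

lemma coe_unionAddCoset (h2A : A + A ∈ G) :
    (G.unionAddCoset A h2A : Set M) = (G : Set M) ∪ (· + A) '' G := rfl

variable {G A}

lemma ncard_union_image_add (hG : (G : Set M).Finite) (hA : A ∉ G) :
    ((G : Set M) ∪ (· + A) '' G).ncard = 2 * Nat.card G := by
  have hdisj : Disjoint (G : Set M) ((· + A) '' G) := by
    refine Set.disjoint_left.2 fun x hx ⟨g, hg, hgx⟩ => hA ?_
    simpa [← hgx] using G.sub_mem hx hg
  rw [Set.ncard_union_eq hdisj hG (hG.image _),
    Set.ncard_image_of_injective _ (add_left_injective A), two_mul, ← Nat.card_coe_set_eq]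
  rfl

end AddSubgroup

theorem translation_arc_doubling_general
    {r : ℕ} {K : Type*} [Field K] [Fintype K]
    (hq : Fintype.card K = 2 ^ r)
    (G : AddSubgroup (K × K)) (k : ℕ) (hk : Nat.card G = k)
    (harc : IsArc (KG (G : Set (K × K))))
    (A : K × K) (hA : A ∉ G)
    (hAsec : ∀ p ∈ KG (G : Set (K × K)), ∀ q ∈ KG (G : Set (K × K)),
      p ≠ q → ¬ Coll3 p q (affPt A.1 A.2)) :
    IsArc (KG (G : Set (K × K)) ∪ elation A.1 A.2 '' KG (G : Set (K × K))) ∧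
      (KG (G : Set (K × K)) ∪ elation A.1 A.2 '' KG (G : Set (K × K))).ncard = 2 * k ∧
      ∃ G' : AddSubgroup (K × K),
        (G' : Set (K × K)) = (G : Set (K × K)) ∪ (fun B : K × K => B + A) '' (G : Set (K × K)) ∧
        KG (G : Set (K × K)) ∪ elation A.1 A.2 '' KG (G : Set (K × K)) =
          KG (G' : Set (K × K)) := by
  have : CharP K 2 := charP_of_card_eq_prime_pow hq
  have hAA : A + A ∈ G := by rw [CharTwo.add_self_eq_zero]; exact G.zero_mem
  have hunion : KG (G : Set (K × K)) ∪ elation A.1 A.2 '' KG (G : Set (K × K)) =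
      KG ((G : Set (K × K)) ∪ (· + A) '' G) := by
    rw [elation_image_KG, KG, KG, KG, Set.image_union]
  have hAsec_aff : ∀ x ∈ (G : Set (K × K)), ∀ y ∈ (G : Set (K × K)), x ≠ y →
      AffineIndependent K ![x, y, A] := by
    simpa only [KG, Set.forall_mem_image, ne_eq, affPt_eq_affPt_iff, coll3_affPt_iff,
      not_not] using hAsec
  refine ⟨?_, ?_, G.unionAddCoset A hAA, G.coe_unionAddCoset A hAA, hunion⟩
  · rw [hunion, isArc_KG_iff]
    exact isAffineArc_union_add (isArc_KG_iff.1 harc) hAsec_aff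
  · rw [hunion, ncard_KG, AddSubgroup.ncard_union_image_add (Set.toFinite _) hA, hk]

/-- if `K_G` is a translation `k`-arc and the point `Ā` lies on no
secant of `K_G`, then `K_G ∪ φ_A(K_G)` is a translation `2k`-arc, namely
`K_{G'}` for the additive subgroup `G' = G ∪ (G + A)`. -/
theorem translation_arc_doubling
    {r : ℕ} (hr : 1 ≤ r) {K : Type*} [Field K] [Fintype K]
    (hq : Fintype.card K = 2 ^ r)
    (G : AddSubgroup (K × K)) (k : ℕ) (hk : Nat.card G = k)
    (harc : IsArc (KG (G : Set (K × K))))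
    (A : K × K) (hA : A ∉ G)
    (hAsec : ∀ p ∈ KG (G : Set (K × K)), ∀ q ∈ KG (G : Set (K × K)),
      p ≠ q → ¬ Coll3 p q (affPt A.1 A.2)) :
    IsArc (KG (G : Set (K × K)) ∪ elation A.1 A.2 '' KG (G : Set (K × K))) ∧
      (KG (G : Set (K × K)) ∪ elation A.1 A.2 '' KG (G : Set (K × K))).ncard = 2 * k ∧
      ∃ G' : AddSubgroup (K × K),
        (G' : Set (K × K)) = (G : Set (K × K)) ∪ (fun B : K × K => B + A) '' (G : Set (K × K)) ∧
        KG (G : Set (K × K)) ∪ elation A.1 A.2 '' KG (G : Set (K × K)) =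
          KG (G' : Set (K × K)) :=
  translation_arc_doubling_general hq G k hk harc A hA hAsec
end

section
/- Let q be even, let K be a k-arc in PG(2,q), and let B be a blocking set of the secants of K of minimum size k − 1. Let P1, P2, P3 be three distinct points of K, and for each i ∈ {1,2,3} let Q_i be a point of B lying on the secant through P_j and P_k, where {i,j,k} = {1,2,3}. Then Q1, Q2 and Q3 are collinear. -/
open Projectivization

/-!
Take `P₁, P₂, P₃` as a projective frame. Since `|B| = |S| - 1`, for every `P ∈ S` the map sending
`X ∈ S \ {P}` to the point of `B` on the secant `PX` is a bijection onto `B`; in particular every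
secant carries exactly one point of `B`. Projection from the vertex `Pᵢ` preserves the slope of
lines through `Pᵢ`, so the bijection at `Pᵢ` equates the product of these slopes over
`(B \ {Q₁, Q₂, Q₃}) ∪ {Qᵢ}` with the product over `S \ {P₁, P₂, P₃}`. Multiplying the three
identities, all points off the triangle cancel and what remains is Ceva's condition
`∏ᵢ slopeᵢ(Qᵢ) = 1`. In characteristic `2` it coincides with Menelaus' condition `= -1`, which says
that the `Qᵢ` are collinear.
-/

open Module Submodule Set

lemma Module.Basis.coord_eq_zero_iff_mem_span_pair {R V : Type*} [Ring R] [AddCommGroup V]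
    [Module R V] (e : Basis (Fin 3) R V) (i : Fin 3) (v : V) :
    e.coord i v = 0 ↔ v ∈ span R {e (i + 1), e (i + 2)} := by
  rw [← Set.image_pair, e.mem_span_image, Basis.coord_apply]
  constructor
  · intro h j hj
    have hji : j ≠ i := by rintro rfl; exact Finsupp.mem_support_iff.1 hj h
    simp only [mem_insert_iff, mem_singleton_iff]
    omega
  · intro h
    by_contra hi
    have := h (Finsupp.mem_support_iff.2 hi)
    simp only [mem_insert_iff, mem_singleton_iff] at this
    omega

lemma Set.range_fin_three {α : Type*} (P : Fin 3 → α) (i : Fin 3) :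
    range P = {P i, P (i + 1), P (i + 2)} := by
  ext x
  simp only [mem_range, mem_insert_iff, mem_singleton_iff]
  constructor
  · rintro ⟨j, rfl⟩
    rcases (by omega : j = i ∨ j = i + 1 ∨ j = i + 2) with rfl | rfl | rfl <;> simp
  · rintro (rfl | rfl | rfl) <;> exact ⟨_, rfl⟩

lemma prod_finprod_mem_eq_one {ι α M : Type*} [Fintype ι] [CommMonoid M] {s : Set α}
    (hs : s.Finite) {f : ι → α → M} (h : ∀ x ∈ s, ∏ i, f i x = 1) :
    ∏ i, ∏ᶠ x ∈ s, f i x = 1 := by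
  simp_rw [finprod_mem_eq_finite_toFinset_prod _ hs]
  rw [Finset.prod_comm]
  exact Finset.prod_eq_one fun x hx => h x (hs.mem_toFinset.1 hx)

section Collinearity

variable {K : Type*} [Field K]

lemma Projectivization.submodule_le_iff_rep_mem (x : PGPoint K) (W : Submodule K (Fin 3 → K)) :
    x.submodule ≤ W ↔ x.rep ∈ W := by
  rw [submodule_eq, span_singleton_le_iff_mem]

lemma coll3_of_mem_span_pair {u v : Fin 3 → K} {p q r : PGPoint K}
    (hp : p.rep ∈ span K {u, v}) (hq : q.rep ∈ span K {u, v}) (hr : r.rep ∈ span K {u, v}) :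
    Coll3 p q r := by
  refine ⟨span K {u, v}, ?_, ?_, ?_, ?_⟩
  · have := finrank_range_le_card (R := K) ![u, v]
    rwa [Matrix.range_cons_cons_empty, Fintype.card_fin] at this
  all_goals rwa [Projectivization.submodule_le_iff_rep_mem]

lemma coll3_of_mem_span_s11 {p q r : PGPoint K} (h : r.rep ∈ span K {p.rep, q.rep}) :
    Coll3 p q r :=
  coll3_of_mem_span_pair (subset_span (by simp)) (subset_span (by simp)) h

lemma linearIndependent_rep_pair {p q : PGPoint K} (h : p ≠ q) :
    LinearIndependent K ![p.rep, q.rep] := by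
  have hrep : Projectivization.rep ∘ ![p, q] = ![p.rep, q.rep] := by
    ext i : 1
    fin_cases i <;> rfl
  exact hrep ▸ independent_iff.1 ((independent_pair_iff_ne p q).2 h)

lemma mem_span_of_coll3 {p q r : PGPoint K} (hpq : p ≠ q) (h : Coll3 p q r) :
    r.rep ∈ span K {p.rep, q.rep} := by
  obtain ⟨W, hW, hp, hq, hr⟩ := h
  simp only [Projectivization.submodule_le_iff_rep_mem] at hp hq hr
  have hle : span K {p.rep, q.rep} ≤ W := span_le.2 (by simp [insert_subset_iff, hp, hq])
  have h2 : finrank K (span K {p.rep, q.rep}) = 2 := by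
    have := finrank_span_eq_card (linearIndependent_rep_pair hpq)
    rwa [Matrix.range_cons_cons_empty, Fintype.card_fin] at this
  rwa [eq_of_le_of_finrank_le hle (h2 ▸ hW)]

lemma coll3_iff_mem_span {p q r : PGPoint K} (hpq : p ≠ q) :
    Coll3 p q r ↔ r.rep ∈ span K {p.rep, q.rep} :=
  ⟨mem_span_of_coll3 hpq, coll3_of_mem_span_s11⟩

lemma Coll3.swap {p q r : PGPoint K} (h : Coll3 p q r) : Coll3 q p r := by
  obtain ⟨W, hW, hp, hq, hr⟩ := h
  exact ⟨W, hW, hq, hp, hr⟩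

lemma Coll3.swap_right {p q r : PGPoint K} (h : Coll3 p q r) : Coll3 p r q := by
  obtain ⟨W, hW, hp, hq, hr⟩ := h
  exact ⟨W, hW, hp, hr, hq⟩

lemma IsArc.eq_of_coll3 {S : Set (PGPoint K)} (harc : IsArc S) {p q q' b : PGPoint K}
    (hp : p ∈ S) (hq : q ∈ S) (hq' : q' ∈ S) (hb : b ∉ S) (hpq : p ≠ q) (hpq' : p ≠ q')
    (h : Coll3 p q b) (h' : Coll3 p q' b) : q = q' := by
  have hpb : p ≠ b := by rintro rfl; exact hb hp
  by_contra hqq'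
  refine harc p hp q hq q' hq' hpq hpq' hqq' (coll3_of_mem_span_pair (subset_span (by simp))
    (mem_span_of_coll3 hpb h.swap_right) (mem_span_of_coll3 hpb h'.swap_right))

end Collinearity

section Coordinates

variable {K : Type*} [Field K]

lemma div_eq_div_of_coll3 {φ ψ : (Fin 3 → K) →ₗ[K] K} {p x y : PGPoint K}
    (hφ : φ p.rep = 0) (hψ : ψ p.rep = 0) (hx : p ≠ x) (hy : p ≠ y) (h : Coll3 p x y) :
    φ y.rep / ψ y.rep = φ x.rep / ψ x.rep := by
  obtain ⟨a, b, hab⟩ := mem_span_pair.1 (mem_span_of_coll3 hx h)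
  have hb : b ≠ 0 := by
    rintro rfl
    refine hy (Eq.symm ?_)
    rw [← p.mk_rep, ← y.mk_rep, mk_eq_mk_iff']
    exact ⟨a, by rw [← hab, zero_smul, add_zero]⟩
  rw [← hab]
  simp only [map_add, map_smul, hφ, hψ, smul_eq_mul, mul_zero, zero_add]
  exact mul_div_mul_left _ _ hb

lemma exists_basis_of_not_coll3 {P : Fin 3 → PGPoint K} (h : ¬ Coll3 (P 0) (P 1) (P 2)) :
    ∃ e : Basis (Fin 3) K (Fin 3 → K), ∀ i, e i = (P i).rep := by
  have h12 : P 1 ≠ P 2 := fun h12 => h (coll3_of_mem_span_s11 (h12 ▸ subset_span (by simp)))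
  have hrep : Projectivization.rep ∘ P = Fin.cons (P 0).rep ![(P 1).rep, (P 2).rep] := by
    ext i : 1
    fin_cases i <;> rfl
  have hli : LinearIndependent K (Projectivization.rep ∘ P) := by
    rw [hrep, linearIndependent_finCons, Matrix.range_cons_cons_empty]
    exact ⟨linearIndependent_rep_pair h12,
      fun h0 => h (coll3_of_mem_span_pair h0 (subset_span (by simp)) (subset_span (by simp)))⟩
  refine ⟨basisOfLinearIndependentOfCardEqFinrank hli (by simp), fun i => ?_⟩
  rw [coe_basisOfLinearIndependentOfCardEqFinrank]
  rfl

lemma coord_eq_zero_iff_coll3 {P : Fin 3 → PGPoint K} (hP : Function.Injective P)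
    {e : Basis (Fin 3) K (Fin 3 → K)} (he : ∀ i, e i = (P i).rep) (i : Fin 3) (x : PGPoint K) :
    e.coord i x.rep = 0 ↔ Coll3 (P (i + 1)) (P (i + 2)) x := by
  rw [e.coord_eq_zero_iff_mem_span_pair, he, he, coll3_iff_mem_span (hP.ne (by omega))]

end Coordinates

section BlockingSets

variable {K : Type*} [Field K] [Finite K] {S B : Set (PGPoint K)}

lemma BlocksSecants.exists_bijOn (harc : IsArc S) (hB : BlocksSecants S B)
    (hmin : B.ncard = S.ncard - 1) {p : PGPoint K} (hp : p ∈ S) :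
    ∃ β : PGPoint K → PGPoint K, BijOn β (S \ {p}) B ∧ ∀ q ∈ S \ {p}, Coll3 p q (β q) := by
  choose! β hβB hβ using hB.2 p hp
  have hmaps : MapsTo β (S \ {p}) B := fun q hq => hβB q hq.1 (Ne.symm hq.2)
  have hinj : InjOn β (S \ {p}) := fun q hq q' hq' hqq' =>
    harc.eq_of_coll3 hp hq.1 hq'.1 (hB.1 _ (hmaps hq)) (Ne.symm hq.2) (Ne.symm hq'.2)
      (hβ q hq.1 (Ne.symm hq.2)) (hqq' ▸ hβ q' hq'.1 (Ne.symm hq'.2))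
  -- pigeonhole: `β` injects the `k - 1` points of `S \ {p}` into the `k - 1` points of `B`
  have himage : β '' (S \ {p}) = B := eq_of_subset_of_ncard_le hmaps.image_subset
    (by rw [hinj.ncard_image, ncard_sdiff_singleton_of_mem hp, hmin])
  exact ⟨β, ⟨hmaps, hinj, himage.symm.subset⟩, fun q hq => hβ q hq.1 (Ne.symm hq.2)⟩

lemma BlocksSecants.eq_of_coll3 (harc : IsArc S) (hB : BlocksSecants S B)
    (hmin : B.ncard = S.ncard - 1) {p q b b' : PGPoint K} (hp : p ∈ S) (hq : q ∈ S)
    (hpq : p ≠ q) (hb : b ∈ B) (hb' : b' ∈ B) (h : Coll3 p q b) (h' : Coll3 p q b') :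
    b = b' := by
  obtain ⟨β, hβ, hβc⟩ := hB.exists_bijOn harc hmin hp
  have hβq : ∀ c ∈ B, Coll3 p q c → c = β q := by
    intro c hc hcol
    obtain ⟨x, hx, rfl⟩ := hβ.surjOn hc
    rw [harc.eq_of_coll3 hp hq hx.1 (hB.1 _ hc) hpq (Ne.symm hx.2) hcol (hβc x hx)]
  rw [hβq b hb h, hβq b' hb' h']

end BlockingSets

section Triangle

variable {K : Type*} [Field K] {S B : Set (PGPoint K)} {P Q : Fin 3 → PGPoint K}
  {e : Basis (Fin 3) K (Fin 3 → K)}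

/-- In the frame `e`, the slope at vertex `i` of the line joining vertex `i` to `x`. -/
noncomputable def vertexSlope (e : Basis (Fin 3) K (Fin 3 → K)) (i : Fin 3) (x : PGPoint K) : K :=
  e.coord (i + 1) x.rep / e.coord (i + 2) x.rep

lemma prod_vertexSlope_eq_one (e : Basis (Fin 3) K (Fin 3 → K)) {x : PGPoint K}
    (hx : ∀ i, e.coord i x.rep ≠ 0) : ∏ i, vertexSlope e i x = 1 := by
  have h0 := hx 0
  have h1 := hx 1
  have h2 := hx 2
  simp only [Fin.prod_univ_three, vertexSlope, Fin.isValue, Fin.reduceAdd]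
  field_simp

lemma coll3_of_prod_vertexSlope_eq_one (h2 : (2 : K) = 0)
    (hQ : ∀ i, e.coord i (Q i).rep = 0) (h : ∏ i, vertexSlope e i (Q i) = 1) :
    Coll3 (Q 0) (Q 1) (Q 2) := by
  have hQ0 := hQ 0
  have hQ1 := hQ 1
  have hQ2 := hQ 2
  simp only [Fin.prod_univ_three, vertexSlope, Fin.isValue, Fin.reduceAdd] at h
  have hu1 : e.coord 1 (Q 0).rep ≠ 0 := fun h0 => by simp [h0] at h
  have hu2 : e.coord 2 (Q 0).rep ≠ 0 := fun h0 => by simp [h0] at h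
  have hw0 : e.coord 0 (Q 1).rep ≠ 0 := fun h0 => by simp [h0] at h
  have hz1 : e.coord 1 (Q 2).rep ≠ 0 := fun h0 => by simp [h0] at h
  field_simp at h
  refine coll3_of_mem_span_s11 (mem_span_pair.2 ⟨e.coord 1 (Q 2).rep / e.coord 1 (Q 0).rep,
    e.coord 0 (Q 2).rep / e.coord 0 (Q 1).rep, ?_⟩)
  rw [e.ext_elem_iff]
  intro j
  simp only [map_add, map_smul, Finsupp.add_apply, Finsupp.smul_apply, smul_eq_mul,
    ← Basis.coord_apply]
  fin_cases j
  all_goals simp only [Fin.zero_eta, Fin.mk_one, Fin.reduceFinMk, Fin.isValue, hQ0, hQ1, hQ2]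
  all_goals field_simp
  · ring
  · ring
  · linear_combination h + e.coord 2 (Q 0).rep * e.coord 0 (Q 1).rep * e.coord 1 (Q 2).rep * h2

lemma ne_add_one_of_coll3 (harc : IsArc S) (hB : BlocksSecants S B) (hPS : ∀ i, P i ∈ S)
    (hP : Function.Injective P) (hQB : ∀ i, Q i ∈ B)
    (hQ : ∀ i, Coll3 (P (i + 1)) (P (i + 2)) (Q i)) (i : Fin 3) : Q i ≠ Q (i + 1) := by
  intro hQQ
  have hQ' := hQ (i + 1)
  rw [show i + 1 + 1 = i + 2 by omega, show i + 1 + 2 = i by omega, ← hQQ] at hQ'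
  exact hP.ne (by omega) (harc.eq_of_coll3 (hPS _) (hPS _) (hPS _) (hB.1 _ (hQB i))
    (hP.ne (by omega)) (hP.ne (by omega)) (hQ i).swap hQ')

end Triangle

section FrameProducts

variable {K : Type*} [Field K] [Finite K] {S B : Set (PGPoint K)} {P Q : Fin 3 → PGPoint K}
  {e : Basis (Fin 3) K (Fin 3 → K)}

lemma BlocksSecants.exists_bijOn_sdiff_range (harc : IsArc S) (hB : BlocksSecants S B)
    (hmin : B.ncard = S.ncard - 1) (hPS : ∀ i, P i ∈ S) (hP : Function.Injective P)
    (hQB : ∀ i, Q i ∈ B) (hQ : ∀ i, Coll3 (P (i + 1)) (P (i + 2)) (Q i)) (i : Fin 3) :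
    ∃ β : PGPoint K → PGPoint K, BijOn β (S \ range P) (insert (Q i) (B \ range Q)) ∧
      ∀ X ∈ S \ range P, Coll3 (P i) X (β X) := by
  obtain ⟨β, hβ, hβc⟩ := hB.exists_bijOn harc hmin (hPS i)
  have hmem : ∀ j ≠ i, P j ∈ S \ {P i} := fun j hj => ⟨hPS j, hP.ne hj⟩
  have hβ1 : β (P (i + 1)) = Q (i + 2) := by
    have hQ' := hQ (i + 2)
    rw [show i + 2 + 1 = i by omega, show i + 2 + 2 = i + 1 by omega] at hQ'
    exact hB.eq_of_coll3 harc hmin (hPS i) (hPS _) (hP.ne (by omega))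
      (hβ.mapsTo (hmem _ (by omega))) (hQB _) (hβc _ (hmem _ (by omega))) hQ'
  have hβ2 : β (P (i + 2)) = Q (i + 1) := by
    have hQ' := hQ (i + 1)
    rw [show i + 1 + 1 = i + 2 by omega, show i + 1 + 2 = i by omega] at hQ'
    exact hB.eq_of_coll3 harc hmin (hPS i) (hPS _) (hP.ne (by omega))
      (hβ.mapsTo (hmem _ (by omega))) (hQB _) (hβc _ (hmem _ (by omega))) hQ'.swap
  have hbij := (hβ.sdiff_singleton (hmem (i + 1) (by omega))).sdiff_singleton
    ⟨hmem (i + 2) (by omega), hP.ne (by omega)⟩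
  rw [hβ1, hβ2] at hbij
  have hS : S \ range P = ((S \ {P i}) \ {P (i + 1)}) \ {P (i + 2)} := by
    rw [range_fin_three P i]
    ext
    simp only [mem_sdiff, mem_insert_iff, mem_singleton_iff]
    tauto
  have hB' : insert (Q i) (B \ range Q) = (B \ {Q (i + 2)}) \ {Q (i + 1)} := by
    have h1 := ne_add_one_of_coll3 harc hB hPS hP hQB hQ i
    have h2 := ne_add_one_of_coll3 harc hB hPS hP hQB hQ (i + 2)
    rw [show i + 2 + 1 = i by omega] at h2
    rw [range_fin_three Q i]
    ext
    simp only [mem_sdiff, mem_insert_iff, mem_singleton_iff]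
    grind [hQB i]
  rw [hS, hB']
  exact ⟨β, hbij, fun X hX => hβc X hX.1.1⟩

lemma vertexSlope_mul_finprod_eq (harc : IsArc S) (hB : BlocksSecants S B)
    (hmin : B.ncard = S.ncard - 1) (hPS : ∀ i, P i ∈ S) (hP : Function.Injective P)
    (hQB : ∀ i, Q i ∈ B) (hQ : ∀ i, Coll3 (P (i + 1)) (P (i + 2)) (Q i))
    (he : ∀ i, e i = (P i).rep) (i : Fin 3) :
    vertexSlope e i (Q i) * ∏ᶠ b ∈ B \ range Q, vertexSlope e i b =
      ∏ᶠ X ∈ S \ range P, vertexSlope e i X := by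
  obtain ⟨β, hβ, hβc⟩ := hB.exists_bijOn_sdiff_range harc hmin hPS hP hQB hQ i
  have hcoord : ∀ j ≠ i, e.coord j (P i).rep = 0 := fun j hj => by
    rw [← he, Basis.coord_apply, Basis.repr_self, Finsupp.single_apply, if_neg hj.symm]
  rw [← finprod_mem_insert _ (fun h => h.2 ⟨i, rfl⟩) (toFinite _)]
  refine (finprod_mem_eq_of_bijOn β hβ fun X hX => ?_).symm
  have hβX : β X ∈ B := insert_subset_iff.2 ⟨hQB i, sdiff_subset⟩ (hβ.mapsTo hX)
  exact (div_eq_div_of_coll3 (hcoord _ (by omega)) (hcoord _ (by omega))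
    (fun h => hX.2 ⟨i, h⟩) (ne_of_mem_of_not_mem (hPS i) (hB.1 _ hβX)) (hβc X hX)).symm

lemma prod_vertexSlope_eq_one_of_blocksSecants (harc : IsArc S) (hB : BlocksSecants S B)
    (hmin : B.ncard = S.ncard - 1) (hPS : ∀ i, P i ∈ S) (hP : Function.Injective P)
    (hQB : ∀ i, Q i ∈ B) (hQ : ∀ i, Coll3 (P (i + 1)) (P (i + 2)) (Q i))
    (he : ∀ i, e i = (P i).rep) : ∏ i, vertexSlope e i (Q i) = 1 := by
  have hS : ∀ X ∈ S \ range P, ∏ i, vertexSlope e i X = 1 := fun X hX =>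
    prod_vertexSlope_eq_one e fun i h0 => harc _ (hPS _) _ (hPS _) X hX.1 (hP.ne (by omega))
      (fun h => hX.2 ⟨_, h⟩) (fun h => hX.2 ⟨_, h⟩) ((coord_eq_zero_iff_coll3 hP he i X).1 h0)
  have hD : ∀ b ∈ B \ range Q, ∏ i, vertexSlope e i b = 1 := fun b hb =>
    prod_vertexSlope_eq_one e fun i h0 => hb.2 ⟨i, hB.eq_of_coll3 harc hmin (hPS _) (hPS _)
      (hP.ne (by omega)) (hQB i) hb.1 (hQ i) ((coord_eq_zero_iff_coll3 hP he i b).1 h0)⟩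
  calc ∏ i, vertexSlope e i (Q i)
      = (∏ i, vertexSlope e i (Q i)) * ∏ i, ∏ᶠ b ∈ B \ range Q, vertexSlope e i b := by
        rw [prod_finprod_mem_eq_one (toFinite _) hD, mul_one]
    _ = ∏ i, ∏ᶠ X ∈ S \ range P, vertexSlope e i X := by
        rw [← Finset.prod_mul_distrib]
        exact Finset.prod_congr rfl fun i _ =>
          vertexSlope_mul_finprod_eq harc hB hmin hPS hP hQB hQ he i
    _ = 1 := prod_finprod_mem_eq_one (toFinite _) hS

end FrameProducts

lemma two_eq_zero_of_card_eq_two_pow {K : Type*} [Field K] [Fintype K] {r : ℕ}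
    (hq : Fintype.card K = 2 ^ r) : (2 : K) = 0 := by
  have h := FiniteField.cast_card_eq_zero K
  rw [hq, Nat.cast_pow, Nat.cast_ofNat] at h
  exact eq_zero_of_pow_eq_zero h

theorem blocking_points_of_triangle_are_collinear_general
    {r : ℕ} {K : Type*} [Field K] [Fintype K]
    (hq : Fintype.card K = 2 ^ r)
    (S B : Set (PGPoint K)) (harc : IsArc S)
    (hB : BlocksSecants S B) (hmin : B.ncard = S.ncard - 1)
    (P1 P2 P3 : PGPoint K) (hP1 : P1 ∈ S) (hP2 : P2 ∈ S) (hP3 : P3 ∈ S)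
    (h12 : P1 ≠ P2) (h13 : P1 ≠ P3) (h23 : P2 ≠ P3)
    (Q1 Q2 Q3 : PGPoint K) (hQ1 : Q1 ∈ B) (hQ2 : Q2 ∈ B) (hQ3 : Q3 ∈ B)
    (hQ1c : Coll3 P2 P3 Q1) (hQ2c : Coll3 P1 P3 Q2) (hQ3c : Coll3 P1 P2 Q3) :
    Coll3 Q1 Q2 Q3 := by
  let P : Fin 3 → PGPoint K := ![P1, P2, P3]
  let Q : Fin 3 → PGPoint K := ![Q1, Q2, Q3]
  have hPS : ∀ i, P i ∈ S := by intro i; fin_cases i <;> assumption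
  have hP : Function.Injective P := by
    intro i j
    fin_cases i <;> fin_cases j <;> simp [P, h12, h13, h23, h12.symm, h13.symm, h23.symm]
  have hQB : ∀ i, Q i ∈ B := by intro i; fin_cases i <;> assumption
  have hQ : ∀ i, Coll3 (P (i + 1)) (P (i + 2)) (Q i) := by
    intro i
    fin_cases i
    exacts [hQ1c, hQ2c.swap, hQ3c]
  obtain ⟨e, he⟩ := exists_basis_of_not_coll3 (P := P) (harc P1 hP1 P2 hP2 P3 hP3 h12 h13 h23)
  exact coll3_of_prod_vertexSlope_eq_one (two_eq_zero_of_card_eq_two_pow hq)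
    (fun i => (coord_eq_zero_iff_coll3 hP he i _).2 (hQ i))
    (prod_vertexSlope_eq_one_of_blocksSecants harc hB hmin hPS hP hQB hQ he)

/-- Proposition on triangles: if `B` is a blocking set of
minimum size of the secants of an arc `S` in `PG(2,q)`, `q` even, then any
three points of `B` blocking the secants of a triangle contained in `S` are
collinear. -/
theorem blocking_points_of_triangle_are_collinear
    {r : ℕ} (hr : 1 ≤ r) {K : Type*} [Field K] [Fintype K]
    (hq : Fintype.card K = 2 ^ r)
    (S B : Set (PGPoint K)) (harc : IsArc S)
    (hB : BlocksSecants S B) (hmin : B.ncard = S.ncard - 1)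
    (P1 P2 P3 : PGPoint K) (hP1 : P1 ∈ S) (hP2 : P2 ∈ S) (hP3 : P3 ∈ S)
    (h12 : P1 ≠ P2) (h13 : P1 ≠ P3) (h23 : P2 ≠ P3)
    (Q1 Q2 Q3 : PGPoint K) (hQ1 : Q1 ∈ B) (hQ2 : Q2 ∈ B) (hQ3 : Q3 ∈ B)
    (hQ1c : Coll3 P2 P3 Q1) (hQ2c : Coll3 P1 P3 Q2) (hQ3c : Coll3 P1 P2 Q3) :
    Coll3 Q1 Q2 Q3 :=
  blocking_points_of_triangle_are_collinear_general hq S B harc hB hmin P1 P2 P3 hP1 hP2 hP3 h12 h13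
    h23 Q1 Q2 Q3 hQ1 hQ2 hQ3 hQ1c hQ2c hQ3c
end
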